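/- arXiv:2309.04103 — 2 statements merged into one kernel-verified Lean document; each statement's English description precedes it below -/
import Mathlib

section
/- Let d ≥ 2 and 1 ≤ k ≤ d−1. Let μ be a Borel probability measure on ℝ^d with compact support such that μ(P) = 0 for every k-dimensional affine subspace P ⊂ ℝ^d. Then for every c > 0 there exists r₀ > 0 such that μ({z ∈ ℝ^d : dist(z, P) < r₀}) < c for every k-dimensional affine subspace P ⊂ ℝ^d. -/
open MeasureTheory Metric Set

section aux
variable {k : ℕ}
variable {E : Type*} [NormedAddCommGroup E] [InnerProductSpace ℝ E]

/-- orthogonal complement part of `z - x` w.r.t. the frame `e`. -/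
noncomputable def planeQv (x : E) (e : Fin k → E) (z : E) : E :=
  (z - x) - ∑ i, (inner ℝ (z - x) (e i) : ℝ) • e i

lemma infDist_plane (x : E) (e : Fin k → E) (he : Orthonormal ℝ e) (z : E) :
    infDist z ((AffineSubspace.mk' x (Submodule.span ℝ (Set.range e)) :
      AffineSubspace ℝ E) : Set E) = ‖planeQv x e z‖ := by
  classical
  set V := Submodule.span ℝ (Set.range e)
  set p : E := x + ∑ i, (inner ℝ (z - x) (e i) : ℝ) • e i with hp
  have hsum : (∑ i, (inner ℝ (z - x) (e i) : ℝ) • e i) ∈ V :=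
    Submodule.sum_mem _ fun i _ => Submodule.smul_mem _ _
      (Submodule.subset_span (Set.mem_range_self i))
  have hpmem : p ∈ AffineSubspace.mk' x V := by
    simpa [hp] using hsum
  have hq : z - p = planeQv x e z := by
    simp [hp, planeQv]; abel
  have horth : ∀ w ∈ V, (inner ℝ (planeQv x e z) w : ℝ) = 0 := by
    intro w hw
    induction hw using Submodule.span_induction with
    | mem w hw =>
      obtain ⟨j, rfl⟩ := hw
      have he' := orthonormal_iff_ite.mp he
      simp only [planeQv, inner_sub_left, sum_inner, real_inner_smul_left, he',
        mul_ite, mul_one, mul_zero, Finset.sum_ite_eq', Finset.mem_univ, if_true, sub_self]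
    | zero => simp
    | add a b _ _ ha hb => rw [inner_add_right, ha, hb]; ring
    | smul c a _ ha => rw [inner_smul_right, ha]; ring
  refine le_antisymm ?_ ?_
  · calc infDist z _ ≤ dist z p := infDist_le_dist_of_mem hpmem
    _ = ‖planeQv x e z‖ := by rw [dist_eq_norm, hq]
  · by_contra hlt
    push_neg at hlt
    obtain ⟨y, hy, hdy⟩ := (infDist_lt_iff ⟨p, hpmem⟩).mp hlt
    have hyv : y -ᵥ x ∈ V := (AffineSubspace.mem_mk').mp hy
    have hpy : p - y ∈ V := by
      have h' : p - y = (∑ i, (inner ℝ (z - x) (e i) : ℝ) • e i) - (y - x) := by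
        rw [hp]; abel
      rw [h']
      exact Submodule.sub_mem _ hsum hyv
    have hZ : (inner ℝ (planeQv x e z) (p - y) : ℝ) = 0 := horth _ hpy
    have hdecomp : z - y = planeQv x e z + (p - y) := by rw [← hq]; abel
    have hpyth : ‖z - y‖ ^ 2 = ‖planeQv x e z‖ ^ 2 + ‖p - y‖ ^ 2 := by
      rw [hdecomp, norm_add_sq_real, hZ]; ring
    have h1 : ‖planeQv x e z‖ ^ 2 ≤ ‖z - y‖ ^ 2 := by nlinarith [sq_nonneg ‖p - y‖]
    have h2 : ‖planeQv x e z‖ ≤ ‖z - y‖ :=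
      le_of_pow_le_pow_left₀ two_ne_zero (norm_nonneg _) h1
    rw [dist_eq_norm] at hdy
    linarith

lemma exists_frame [FiniteDimensional ℝ E] (V : Submodule ℝ E) (hV : Module.finrank ℝ V = k) :
    ∃ e : Fin k → E, Orthonormal ℝ e ∧ Submodule.span ℝ (Set.range e) = V := by
  let b := (stdOrthonormalBasis ℝ V).reindex (finCongr hV)
  refine ⟨fun i => (b i : E), ?_, ?_⟩
  · exact b.orthonormal.comp_linearIsometry V.subtypeₗᵢ
  · have h1 : Set.range (fun i => (b i : E)) = V.subtype '' Set.range b := by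
      ext w; simp [Submodule.subtype]
    rw [h1, ← Submodule.map_span, ← OrthonormalBasis.coe_toBasis, b.toBasis.span_eq,
      Submodule.map_top, Submodule.range_subtype]

end aux

/-- **Compactness argument from the proof of Theorem 1.2.** If a compactly supported Borel
probability measure on `ℝ^d` gives zero mass to every `k`-dimensional affine subspace, then
for every `c > 0` there is `r₀ > 0` such that every open `r₀`-neighborhood of a
`k`-dimensional affine subspace has measure less than `c`. -/
theorem small_plane_neighborhoods (d k : ℕ) (hd : 2 ≤ d) (hk1 : 1 ≤ k) (hk2 : k ≤ d - 1)
    (μ : Measure (EuclideanSpace ℝ (Fin d))) (hprob : IsProbabilityMeasure μ)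
    (hcpt : ∃ K : Set (EuclideanSpace ℝ (Fin d)), IsCompact K ∧ μ Kᶜ = 0)
    (hplanes : ∀ P : AffineSubspace ℝ (EuclideanSpace ℝ (Fin d)),
      (P : Set (EuclideanSpace ℝ (Fin d))).Nonempty →
      Module.finrank ℝ P.direction = k →
      μ (P : Set (EuclideanSpace ℝ (Fin d))) = 0)
    (c : ℝ) (hc : 0 < c) :
    ∃ r₀ : ℝ, 0 < r₀ ∧
      ∀ P : AffineSubspace ℝ (EuclideanSpace ℝ (Fin d)),
        (P : Set (EuclideanSpace ℝ (Fin d))).Nonempty →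
        Module.finrank ℝ P.direction = k →
        μ {z | infDist z (P : Set (EuclideanSpace ℝ (Fin d))) < r₀} < ENNReal.ofReal c := by
  classical
  set E := EuclideanSpace ℝ (Fin d)
  obtain ⟨K, hKc, hK0⟩ := hcpt
  by_contra hcon
  push_neg at hcon
  obtain ⟨R, hRK⟩ := hKc.isBounded.subset_closedBall 0
  -- For each n, produce a plane given by a frame in a fixed compact set.
  have hchoice : ∀ n : ℕ, ∃ (x : E) (e : Fin k → E), ‖x‖ ≤ R + 1 ∧ Orthonormal ℝ e ∧
      ENNReal.ofReal c ≤ μ {z | infDist z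
        ((AffineSubspace.mk' x (Submodule.span ℝ (Set.range e)) : AffineSubspace ℝ E) : Set E)
        < 1 / (n + 1)} := by
    intro n
    obtain ⟨P, hPne, hPrk, hPbig⟩ := hcon (1 / (n + 1)) (by positivity)
    set S := {z : E | infDist z (P : Set E) < 1 / (n + 1)} with hS
    have hSK : (S ∩ K).Nonempty := by
      rw [nonempty_iff_ne_empty]
      intro hemp
      have h1 : μ S ≤ μ (S ∩ K) + μ (S \ K) := measure_le_inter_add_diff μ S K
      have h2 : μ (S \ K) ≤ μ Kᶜ := measure_mono fun z hz => hz.2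
      have h3 : μ (S ∩ K) = 0 := by rw [hemp]; exact measure_empty
      have h4 : μ S ≤ 0 := by
        calc μ S ≤ μ (S ∩ K) + μ (S \ K) := measure_le_inter_add_diff μ S K
          _ ≤ 0 + μ Kᶜ := add_le_add h3.le h2
          _ = 0 := by rw [hK0, zero_add]
      have : μ S = 0 := le_antisymm h4 zero_le
      rw [this] at hPbig
      exact absurd (le_antisymm hPbig zero_le) (by simp [ENNReal.ofReal_eq_zero, hc, not_le])
    obtain ⟨z, hzS, hzK⟩ := hSK
    obtain ⟨y, hyP, hdy⟩ := (infDist_lt_iff hPne).mp hzS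
    have hy : ‖y‖ ≤ R + 1 := by
      have hz : ‖z‖ ≤ R := by simpa using hRK hzK
      have h1 : (1 : ℝ) / (n + 1) ≤ 1 := by
        rw [div_le_one (by positivity)]; linarith [Nat.cast_nonneg (α := ℝ) n]
      calc ‖y‖ = ‖z - (z - y)‖ := by rw [sub_sub_cancel]
        _ ≤ ‖z‖ + ‖z - y‖ := by
            simpa using norm_sub_le z (z - y)
        _ ≤ R + 1 := by
            rw [← dist_eq_norm] at *
            linarith
    obtain ⟨e, he, hspan⟩ := exists_frame P.direction hPrk
    refine ⟨y, e, hy, he, ?_⟩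
    have hPeq : (AffineSubspace.mk' y (Submodule.span ℝ (Set.range e)) : AffineSubspace ℝ E)
        = P := by rw [hspan]; exact AffineSubspace.mk'_eq hyP
    rw [hPeq]
    exact hPbig
  choose x e hx he hbig using hchoice
  -- Compactness of the parameter space.
  have hCcl : IsClosed {f : Fin k → E | Orthonormal ℝ f} := by
    have : {f : Fin k → E | Orthonormal ℝ f} =
        ⋂ i, ⋂ j, {f : Fin k → E | (inner ℝ (f i) (f j) : ℝ) = if i = j then 1 else 0} := by
      ext f; simp [orthonormal_iff_ite, Set.mem_iInter]
    rw [this]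
    exact isClosed_iInter fun i => isClosed_iInter fun j =>
      isClosed_eq (Continuous.inner (continuous_apply i) (continuous_apply j)) continuous_const
  have hCsub : {f : Fin k → E | Orthonormal ℝ f} ⊆ closedBall 0 1 := by
    intro f hf
    rw [mem_closedBall_zero_iff]
    refine (pi_norm_le_iff_of_nonneg zero_le_one).mpr fun i => le_of_eq (hf.1 i)
  have hCcpt : IsCompact {f : Fin k → E | Orthonormal ℝ f} :=
    (isCompact_closedBall (0 : Fin k → E) 1).of_isClosed_subset hCcl hCsub
  have hTcpt : IsCompact ((closedBall (0 : E) (R + 1)) ×ˢ {f : Fin k → E | Orthonormal ℝ f}) :=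
    (isCompact_closedBall _ _).prod hCcpt
  have hmem : ∀ n, (x n, e n) ∈
      (closedBall (0 : E) (R + 1)) ×ˢ {f : Fin k → E | Orthonormal ℝ f} := fun n =>
    ⟨mem_closedBall_zero_iff.mpr (hx n), he n⟩
  obtain ⟨⟨xL, eL⟩, ⟨hxL, heL⟩, φ, hφ, hlim⟩ := hTcpt.tendsto_subseq hmem
  have heL' : Orthonormal ℝ eL := heL
  -- The limit plane has measure zero.
  set PL : AffineSubspace ℝ E := AffineSubspace.mk' xL (Submodule.span ℝ (Set.range eL)) with hPL
  have hPLne : ((PL : Set E)).Nonempty := ⟨xL, AffineSubspace.self_mem_mk' _ _⟩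
  have hPLrk : Module.finrank ℝ PL.direction = k := by
    rw [hPL, AffineSubspace.direction_mk', finrank_span_eq_card heL'.linearIndependent]
    simp
  have hPL0 : μ (PL : Set E) = 0 := hplanes PL hPLne hPLrk
  -- Shrinking closed neighborhoods of PL intersected with K.
  set A : ℕ → Set E := fun m => {z : E | infDist z (PL : Set E) ≤ 1 / (m + 1)} ∩ K with hA
  have hAclosed : ∀ m, IsClosed (A m) := fun m =>
    (isClosed_le (continuous_infDist_pt _) continuous_const).inter hKc.isClosed
  have hAanti : Antitone A := by
    intro m m' hmm'
    refine Set.inter_subset_inter_left _ fun z hz => ?_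
    simp only [Set.mem_setOf_eq] at hz ⊢
    refine le_trans hz ?_
    apply one_div_le_one_div_of_le (by positivity)
    have hmc : (m : ℝ) ≤ m' := Nat.cast_le.mpr hmm'
    linarith
  have hAint : (⋂ m, A m) ⊆ (PL : Set E) := by
    intro z hz
    have h0 : infDist z (PL : Set E) = 0 := by
      by_contra h
      have hpos : 0 < infDist z (PL : Set E) :=
        lt_of_le_of_ne infDist_nonneg (Ne.symm h)
      obtain ⟨m, hm⟩ := exists_nat_one_div_lt hpos
      exact absurd ((Set.mem_iInter.mp hz m).1) (not_le.mpr hm)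
    have hclosed : IsClosed (PL : Set E) := PL.closed_of_finiteDimensional
    rw [← hclosed.closure_eq]
    exact (mem_closure_iff_infDist_zero hPLne).mpr h0
  have htend : Filter.Tendsto (fun m => μ (A m)) Filter.atTop (nhds (μ (⋂ m, A m))) :=
    tendsto_measure_iInter_atTop (fun m => ((hAclosed m).measurableSet).nullMeasurableSet)
      hAanti ⟨0, measure_ne_top μ _⟩
  have hμint : μ (⋂ m, A m) = 0 :=
    le_antisymm (le_trans (measure_mono hAint) hPL0.le) zero_le
  rw [hμint] at htend
  have hev : ∀ᶠ m in Filter.atTop, μ (A m) < ENNReal.ofReal c :=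
    htend.eventually_lt_const (by simpa using hc)
  obtain ⟨m, hm⟩ := hev.exists
  set ε : ℝ := 1 / (m + 1) with hε
  have hεpos : 0 < ε := by positivity
  -- Uniform closeness of planeQv on K.
  have hQcont : Continuous (fun w : (E × (Fin k → E)) × E =>
      ‖planeQv w.1.1 w.1.2 w.2 - planeQv xL eL w.2‖) := by
    have h1 : Continuous (fun w : (E × (Fin k → E)) × E => planeQv w.1.1 w.1.2 w.2) := by
      unfold planeQv
      refine Continuous.sub (continuous_snd.sub continuous_fst.fst) ?_
      refine continuous_finset_sum _ fun i _ => Continuous.fun_smul ?_ ?_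
      · exact Continuous.inner (continuous_snd.sub continuous_fst.fst)
          ((continuous_apply i).comp continuous_fst.snd)
      · exact (continuous_apply i).comp continuous_fst.snd
    have h2 : Continuous (fun w : (E × (Fin k → E)) × E => planeQv xL eL w.2) := by
      unfold planeQv
      refine Continuous.sub (continuous_snd.sub continuous_const) ?_
      refine continuous_finset_sum _ fun i _ => Continuous.fun_smul ?_ continuous_const
      exact Continuous.inner (continuous_snd.sub continuous_const) continuous_const
    exact (h1.sub h2).norm
  have hevnbhd : ∀ᶠ t' : E × (Fin k → E) in nhds (xL, eL), ∀ z ∈ K,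
      ‖planeQv t'.1 t'.2 z - planeQv xL eL z‖ < ε / 2 := by
    apply hKc.eventually_forall_of_forall_eventually
    intro z₀ hz₀
    have h0 : ‖planeQv xL eL z₀ - planeQv xL eL z₀‖ < ε / 2 := by simpa using half_pos hεpos
    exact hQcont.continuousAt.eventually_lt continuousAt_const h0
  have hevn : ∀ᶠ n in Filter.atTop, ∀ z ∈ K,
      ‖planeQv (x (φ n)) (e (φ n)) z - planeQv xL eL z‖ < ε / 2 :=
    hlim.eventually hevnbhd
  obtain ⟨N, hN⟩ := hevn.exists_forall_of_atTop
  -- pick n large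
  set n := max N (2 * (m + 1)) with hn
  have hn1 : ∀ z ∈ K, ‖planeQv (x (φ n)) (e (φ n)) z - planeQv xL eL z‖ < ε / 2 :=
    hN n (le_max_left _ _)
  have hφn : (2 * (m + 1) : ℕ) ≤ φ n := le_trans (le_max_right _ _) (hφ.le_apply)
  have hsmall : (1 : ℝ) / (φ n + 1) ≤ ε / 2 := by
    rw [hε]
    have h1 : (2 * (m + 1) : ℝ) ≤ (φ n : ℝ) + 1 := by
      have : ((2 * (m + 1) : ℕ) : ℝ) ≤ (φ n : ℝ) := Nat.cast_le.mpr hφn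
      push_cast at this ⊢
      linarith
    rw [div_div]
    apply one_div_le_one_div_of_le (by positivity)
    push_cast
    linarith
  -- Contradiction
  set S := {z : E | infDist z
      ((AffineSubspace.mk' (x (φ n)) (Submodule.span ℝ (Set.range (e (φ n)))) :
        AffineSubspace ℝ E) : Set E) < 1 / (φ n + 1)} with hSdef
  have hsub : S ∩ K ⊆ A m := by
    rintro z ⟨hzS, hzK⟩
    rw [hSdef, Set.mem_setOf_eq, infDist_plane _ _ (he (φ n))] at hzS
    refine ⟨?_, hzK⟩
    rw [Set.mem_setOf_eq, infDist_plane _ _ heL']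
    have h1 := hn1 z hzK
    calc ‖planeQv xL eL z‖
        ≤ ‖planeQv (x (φ n)) (e (φ n)) z‖ +
          ‖planeQv (x (φ n)) (e (φ n)) z - planeQv xL eL z‖ := by
          have := norm_sub_le (planeQv (x (φ n)) (e (φ n)) z)
            (planeQv (x (φ n)) (e (φ n)) z - planeQv xL eL z)
          simpa using this
      _ ≤ ε / 2 + ε / 2 := by
          have := hzS.le.trans hsmall
          linarith
      _ = 1 / (m + 1) := by rw [← hε]; ring
  have hμS : μ S ≤ μ (A m) := by
    calc μ S ≤ μ (S ∩ K) + μ (S \ K) := measure_le_inter_add_diff μ S K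
      _ ≤ μ (A m) + μ Kᶜ := add_le_add (measure_mono hsub) (measure_mono fun z hz => hz.2)
      _ = μ (A m) := by rw [hK0, add_zero]
  exact absurd ((hbig (φ n)).trans hμS) (not_le.mpr hm)
end

section
/- Let E ⊂ ℝ^d be a compact set, x ∈ ℝ^d, and let μ be a Borel probability measure supported on E. Suppose there exist τ ∈ (0,1], K ∈ ℕ, and β > 0 such that for every integer k > K, every integer M ≤ 2^{kτ}, and every set D = I₁ ∪ ⋯ ∪ I_M where each I_j ⊂ ℝ is an interval of length 2^{−k}, one has μ({y : |y−x| ∈ D}) < 2^{−kβ}. Then the Hausdorff dimension of the pinned distance set Δ_x(E) = {|x−y| : y ∈ E} is at least τ. -/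
open MeasureTheory Metric Set
open Filter

lemma liu_aux_scale {r : ℝ} (h0 : 0 < r) (h1 : r ≤ 1) :
    ∃ k : ℕ, (2:ℝ) ^ (-((k:ℝ)+1)) < r ∧ r ≤ 2 ^ (-(k:ℝ)) := by
  classical
  have hex : ∃ m : ℕ, (2:ℝ) ^ (-((m:ℝ)+1)) < r := by
    obtain ⟨n, hn⟩ := exists_nat_gt (1/r)
    refine ⟨n, ?_⟩
    have h2n : (n:ℝ) < 2 ^ n := by exact_mod_cast Nat.lt_two_pow_self (n := n)
    have hlt : 1/r < 2 ^ ((n:ℝ)+1) := by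
      have : (2:ℝ) ^ ((n:ℝ)+1) = 2 ^ (n:ℝ) * 2 := by
        rw [Real.rpow_add (by norm_num), Real.rpow_one]
      rw [this, Real.rpow_natCast]
      nlinarith [pow_pos (by norm_num : (0:ℝ) < 2) n]
    have hpos : (0:ℝ) < 2 ^ ((n:ℝ)+1) := Real.rpow_pos_of_pos (by norm_num) _
    rw [Real.rpow_neg (by norm_num), ← one_div, div_lt_iff₀ hpos]
    rw [div_lt_iff₀ h0] at hlt
    nlinarith
  refine ⟨Nat.find hex, Nat.find_spec hex, ?_⟩
  cases hk : Nat.find hex with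
  | zero => simpa using h1
  | succ j =>
    have hmin := Nat.find_min hex (by omega : j < Nat.find hex)
    push_cast
    exact not_lt.1 hmin |>.trans_eq (by ring_nf)

/-- **Lemma 6.1 (Liu's criterion).** Let `E ⊆ ℝ^d` be compact, `x ∈ ℝ^d`, and let `μ` be a
Borel probability measure supported on `E`. If there are `τ ∈ (0,1]`, `K ∈ ℕ`, `β > 0`
such that `μ({y : |y - x| ∈ D}) < 2^{-kβ}` whenever `k > K`, `M ≤ 2^{kτ}` and `D` is a
union of `M` intervals of length `2^{-k}`, then `dim_H Δ_x(E) ≥ τ`. -/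
theorem liu_criterion (d : ℕ) (E : Set (EuclideanSpace ℝ (Fin d))) (hE : IsCompact E)
    (x : EuclideanSpace ℝ (Fin d)) (μ : Measure (EuclideanSpace ℝ (Fin d)))
    (hprob : IsProbabilityMeasure μ) (hsupp : μ Eᶜ = 0)
    (τ β : ℝ) (hτ0 : 0 < τ) (hτ1 : τ ≤ 1) (K : ℕ) (hβ : 0 < β)
    (h : ∀ k : ℕ, K < k → ∀ M : ℕ, (M : ℝ) ≤ 2 ^ ((k : ℝ) * τ) →
      ∀ I : Fin M → Set ℝ, (∀ j, ∃ a : ℝ, I j = Icc a (a + 2 ^ (-(k : ℝ)))) →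
        μ {y | dist x y ∈ ⋃ j, I j} < ENNReal.ofReal (2 ^ (-(k : ℝ) * β))) :
    ENNReal.ofReal τ ≤ dimH {t : ℝ | ∃ y ∈ E, dist x y = t} := by
  classical
  set Δ : Set ℝ := {t : ℝ | ∃ y ∈ E, dist x y = t} with hΔdef
  set f : EuclideanSpace ℝ (Fin d) → ℝ := fun y => dist x y with hfdef
  have hfc : Continuous f := continuous_const.dist continuous_id
  have hfm : Measurable f := hfc.measurable
  set ν : Measure ℝ := μ.map f with hνdef
  have hΔim : Δ = f '' E := rfl
  have hΔm : MeasurableSet Δ := by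
    rw [hΔim]; exact (hE.image hfc).isClosed.measurableSet
  have hν1 : 1 ≤ ν Δ := by
    rw [hνdef, Measure.map_apply hfm hΔm]
    have hEsub : E ⊆ f ⁻¹' Δ := fun y hy => ⟨y, hy, rfl⟩
    calc (1:ENNReal) = μ Set.univ := measure_univ.symm
      _ ≤ μ (f ⁻¹' Δ) + μ Eᶜ := by
          refine le_trans (measure_mono fun y _ => ?_) (measure_union_le _ _)
          by_cases hy : y ∈ E
          · exact Or.inl (hEsub hy)
          · exact Or.inr hy
      _ = μ (f ⁻¹' Δ) := by rw [hsupp, add_zero]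
  set q : ENNReal := ENNReal.ofReal (2 ^ (-β)) with hqdef
  have hq1 : q < 1 := by
    rw [hqdef]
    have : (2:ℝ) ^ (-β) < 1 := Real.rpow_lt_one_of_one_lt_of_neg (by norm_num) (by linarith)
    calc ENNReal.ofReal (2 ^ (-β)) < ENNReal.ofReal 1 :=
          (ENNReal.ofReal_lt_ofReal_iff (by norm_num)).2 this
      _ = 1 := ENNReal.ofReal_one
  have hqpow : ∀ k : ℕ, ENNReal.ofReal (2 ^ (-(k:ℝ) * β)) = q ^ k := by
    intro k
    rw [hqdef, ← ENNReal.ofReal_pow (by positivity)]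
    congr 1
    rw [← Real.rpow_natCast ((2:ℝ) ^ (-β)) k, ← Real.rpow_mul (by norm_num)]
    ring_nf
  have hatom : ∀ A : Set ℝ, A.Subsingleton → ν A = 0 := by
    intro A hA
    rcases hA.eq_empty_or_singleton with rfl | ⟨t₀, rfl⟩
    · simp
    · refine le_antisymm ?_ zero_le
      have hb : ∀ k, K < k → ν {t₀} ≤ q ^ k := by
        intro k hk
        have h1M : ((1:ℕ):ℝ) ≤ 2 ^ ((k:ℝ) * τ) := by
          rw [Nat.cast_one]
          exact Real.one_le_rpow (by norm_num) (mul_nonneg (Nat.cast_nonneg k) hτ0.le)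
        have happ := h k hk 1 h1M (fun _ => Icc t₀ (t₀ + 2 ^ (-(k:ℝ))))
          (fun _ => ⟨t₀, rfl⟩)
        rw [hqpow k] at happ
        refine le_trans ?_ happ.le
        rw [hνdef, Measure.map_apply hfm (measurableSet_singleton _)]
        refine measure_mono fun y hy => ?_
        have : dist x y = t₀ := hy
        refine mem_iUnion.2 ⟨0, ?_⟩
        rw [this]
        exact ⟨le_refl _, le_add_of_nonneg_right (by positivity)⟩
      have htend := ENNReal.tendsto_pow_atTop_nhds_zero_of_lt_one hq1
      refine ge_of_tendsto htend ?_
      filter_upwards [eventually_gt_atTop K] with k hk using hb k hk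
  set C : ENNReal := (1 - q)⁻¹ with hCdef
  have hCne : C ≠ ⊤ := by
    rw [hCdef, Ne, ENNReal.inv_eq_top, tsub_eq_zero_iff_le]
    exact not_le.2 hq1
  obtain ⟨K', hK'K, hK'lt⟩ : ∃ K' : ℕ, K ≤ K' ∧ q ^ (K' + 1) * C < 1 := by
    have h1 : Tendsto (fun n : ℕ => q ^ n * C) atTop (nhds 0) := by
      have h0 := ENNReal.tendsto_pow_atTop_nhds_zero_of_lt_one hq1
      simpa using ENNReal.Tendsto.mul_const h0 (Or.inr hCne)
    obtain ⟨N, hN⟩ := eventually_atTop.1 (h1.eventually_lt_const (by norm_num : (0:ENNReal) < 1))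
    exact ⟨max K N, le_max_left _ _, hN _ (le_trans (le_max_right _ _) (Nat.le_succ _))⟩
  refine le_of_forall_lt fun a ha => ?_
  obtain ⟨s, has, hsτ⟩ := ENNReal.lt_iff_exists_nnreal_btwn.1 ha
  have hsτ' : (s:ℝ) < τ := by
    rwa [← ENNReal.ofReal_coe_nnreal, ENNReal.ofReal_lt_ofReal_iff hτ0] at hsτ
  refine lt_of_lt_of_le has (le_dimH_of_hausdorffMeasure_ne_zero (d := s) ?_)
  have hmain : ∀ t : ℕ → Set ℝ, Δ ⊆ ⋃ n, t n →
      (∀ n, EMetric.diam (t n) ≤ ENNReal.ofReal (2 ^ (-((K':ℝ) + 1)))) →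
      ENNReal.ofReal (2:ℝ)⁻¹ ≤ ∑' n, ⨆ _ : (t n).Nonempty, EMetric.diam (t n) ^ (s:ℝ) := by
    intro t hcov hdiam
    by_contra hlt
    push_neg at hlt
    set D : ℕ → ℝ := fun n => Metric.diam (t n) with hDdef
    have hdne : ∀ n, EMetric.diam (t n) ≠ ⊤ :=
      fun n => ne_top_of_le_ne_top ENNReal.ofReal_ne_top (hdiam n)
    have hDle : ∀ n, D n ≤ 2 ^ (-((K':ℝ)+1)) :=
      fun n => ENNReal.toReal_le_of_le_ofReal (by positivity) (hdiam n)
    have hDscale : ∀ n : ℕ, ∃ k : ℕ, 0 < D n →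
        (K' < k ∧ (2:ℝ) ^ (-((k:ℝ)+1)) < D n ∧ D n ≤ 2 ^ (-(k:ℝ))) := by
      intro n
      by_cases hpos : 0 < D n
      · have hle1 : D n ≤ 1 := le_trans (hDle n)
          (Real.rpow_le_one_of_one_le_of_nonpos (by norm_num) (neg_nonpos.2 (by positivity)))
        obtain ⟨k, hk1, hk2⟩ := liu_aux_scale hpos hle1
        refine ⟨k, fun _ => ⟨?_, hk1, hk2⟩⟩
        have hlt2 : (2:ℝ) ^ (-((k:ℝ)+1)) < 2 ^ (-((K':ℝ)+1)) := lt_of_lt_of_le hk1 (hDle n)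
        have h' : -((k:ℝ)+1) < -((K':ℝ)+1) :=
          (Real.rpow_lt_rpow_left_iff (by norm_num : (1:ℝ) < 2)).1 hlt2
        exact_mod_cast (by linarith : (K':ℝ) < k)
      · exact ⟨0, fun hp => absurd hp hpos⟩
    choose kk hkk using hDscale
    set S : ℕ → Set ℕ := fun k => {n | 0 < D n ∧ kk n = k} with hSdef
    have hne_of_pos : ∀ n, 0 < D n → (t n).Nonempty := by
      intro n hp
      rcases eq_empty_or_nonempty (t n) with he | hne
      · rw [hDdef] at hp; simp only [he, Metric.diam_empty] at hp; exact absurd hp (lt_irrefl _)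
      · exact hne
    have hG : ∀ k : ℕ, ∀ n ∈ S k, ENNReal.ofReal ((2:ℝ) ^ ((-((k:ℝ)+1)) * (s:ℝ))) ≤
        ⨆ _ : (t n).Nonempty, EMetric.diam (t n) ^ (s:ℝ) := by
      intro k n hn
      obtain ⟨hpos, hkn⟩ := hn
      have hne := hne_of_pos n hpos
      rw [ciSup_pos hne]
      have hdge : ENNReal.ofReal ((2:ℝ) ^ (-((k:ℝ)+1))) ≤ EMetric.diam (t n) := by
        rw [← ENNReal.ofReal_toReal (hdne n)]
        refine ENNReal.ofReal_le_ofReal ?_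
        have := (hkk n hpos).2.1
        rw [hkn] at this
        exact this.le
      calc ENNReal.ofReal ((2:ℝ) ^ ((-((k:ℝ)+1)) * (s:ℝ)))
          = ENNReal.ofReal ((2:ℝ) ^ (-((k:ℝ)+1))) ^ (s:ℝ) := by
            rw [ENNReal.ofReal_rpow_of_pos (by positivity), ← Real.rpow_mul (by norm_num)]
        _ ≤ EMetric.diam (t n) ^ (s:ℝ) := ENNReal.rpow_le_rpow hdge s.coe_nonneg
    by_cases hgood : ∀ k : ℕ, ∃ hfk : (S k).Finite, (hfk.toFinset.card : ℝ) ≤ 2 ^ ((k:ℝ) * τ)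
    · -- measure contradiction
      have hsub0 : ν (⋃ n ∈ {m : ℕ | ¬ 0 < D m}, t n) = 0 := by
        refine (measure_biUnion_null_iff (to_countable _)).2 fun n hn => ?_
        have hD0 : Metric.diam (t n) = 0 := le_antisymm (not_lt.1 hn) Metric.diam_nonneg
        have hed : EMetric.diam (t n) = 0 := by
          rw [Metric.diam] at hD0
          rcases ENNReal.toReal_eq_zero_iff _ |>.1 hD0 with h0 | htop
          · exact h0
          · exact absurd htop (hdne n)
        exact hatom _ (EMetric.diam_eq_zero_iff.1 hed)
      have hνk : ∀ k : ℕ, ν (⋃ n ∈ S k, t n) ≤ (if K' < k then q ^ k else 0) := by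
        intro k
        rcases eq_empty_or_nonempty (S k) with hSe | ⟨n₀, hn₀⟩
        · simp [hSe]
        · have hkK' : K' < k := by
            obtain ⟨hp, hkn⟩ := hn₀
            rw [← hkn]; exact (hkk n₀ hp).1
          have hkK : K < k := lt_of_le_of_lt hK'K hkK'
          rw [if_pos hkK']
          obtain ⟨hfk, hcard⟩ := hgood k
          set M := hfk.toFinset.card with hMdef
          set e : Fin M ≃ {n // n ∈ hfk.toFinset} := hfk.toFinset.equivFin.symm with hedef
          set I : Fin M → Set ℝ :=
            fun j => Icc (sInf (t ((e j : ℕ)))) (sInf (t ((e j : ℕ))) + 2 ^ (-(k:ℝ))) with hIdef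
          have hIcc : ∀ n ∈ S k, t n ⊆ Icc (sInf (t n)) (sInf (t n) + 2 ^ (-(k:ℝ))) := by
            intro n hn
            obtain ⟨hp, hkn⟩ := hn
            have hbdd : Bornology.IsBounded (t n) := Metric.isBounded_iff_ediam_ne_top.2 (hdne n)
            have hne := hne_of_pos n hp
            intro y hy
            have hlb : ∀ z ∈ t n, y - D n ≤ z := by
              intro z hz
              have hd := Metric.dist_le_diam_of_mem hbdd hy hz
              rw [Real.dist_eq] at hd
              have := abs_le.1 hd
              rw [hDdef]; linarith [this.1, this.2]
            have h2 : D n ≤ 2 ^ (-(k:ℝ)) := by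
              have := (hkk n hp).2.2; rw [hkn] at this; exact this
            refine ⟨csInf_le hbdd.bddBelow hy, ?_⟩
            have h1 : y - D n ≤ sInf (t n) := le_csInf hne hlb
            linarith
          have hUsub : (⋃ n ∈ S k, t n) ⊆ ⋃ j, I j := by
            intro y hy
            simp only [mem_iUnion, exists_prop] at hy
            obtain ⟨n, hn, hyn⟩ := hy
            have hmem : n ∈ hfk.toFinset := hfk.mem_toFinset.2 hn
            refine mem_iUnion.2 ⟨e.symm ⟨n, hmem⟩, ?_⟩
            have hval : ((e (e.symm ⟨n, hmem⟩) : {m // m ∈ hfk.toFinset}) : ℕ) = n := by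
              rw [Equiv.apply_symm_apply]
            rw [hIdef]
            simp only [hval]
            exact hIcc n hn hyn
          have happ := h k hkK M (by rw [hMdef] at hcard ⊢; exact hcard) I
            (fun j => ⟨sInf (t ((e j : ℕ))), rfl⟩)
          rw [hqpow k] at happ
          calc ν (⋃ n ∈ S k, t n) ≤ ν (⋃ j, I j) := measure_mono hUsub
            _ = μ {y | dist x y ∈ ⋃ j, I j} := by
                rw [hνdef, Measure.map_apply hfm (MeasurableSet.iUnion fun j => measurableSet_Icc)]
                rfl
            _ ≤ q ^ k := happ.le
      have hchain : (1:ENNReal) ≤ ∑' k : ℕ, (if K' < k then q ^ k else 0) := by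
        have hScover : (⋃ n, t n) ⊆ (⋃ n ∈ {m : ℕ | ¬ 0 < D m}, t n) ∪ ⋃ k, ⋃ n ∈ S k, t n := by
          intro y hy
          obtain ⟨n, hn⟩ := mem_iUnion.1 hy
          by_cases hpos : 0 < D n
          · exact Or.inr (mem_iUnion.2 ⟨kk n, mem_iUnion₂.2 ⟨n, ⟨hpos, rfl⟩, hn⟩⟩)
          · exact Or.inl (mem_iUnion₂.2 ⟨n, hpos, hn⟩)
        calc (1:ENNReal) ≤ ν Δ := hν1
          _ ≤ ν (⋃ n, t n) := measure_mono hcov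
          _ ≤ ν (⋃ n ∈ {m : ℕ | ¬ 0 < D m}, t n) + ν (⋃ k, ⋃ n ∈ S k, t n) :=
              le_trans (measure_mono hScover) (measure_union_le _ _)
          _ = ν (⋃ k, ⋃ n ∈ S k, t n) := by rw [hsub0, zero_add]
          _ ≤ ∑' k, ν (⋃ n ∈ S k, t n) := measure_iUnion_le _
          _ ≤ ∑' k : ℕ, (if K' < k then q ^ k else 0) := ENNReal.tsum_le_tsum hνk
      have htail : ∑' k : ℕ, (if K' < k then q ^ k else 0) ≤ q ^ (K' + 1) * C := by
        have hinj : Function.Injective (fun j : ℕ => j + (K' + 1)) := add_left_injective _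
        have hsupp2 : Function.support (fun k : ℕ => if K' < k then q ^ k else 0) ⊆
            Set.range (fun j : ℕ => j + (K' + 1)) := by
          intro k hk
          by_cases hkK' : K' < k
          · exact ⟨k - (K' + 1), show k - (K' + 1) + (K' + 1) = k by omega⟩
          · simp [hkK'] at hk
        rw [← hinj.tsum_eq hsupp2]
        refine le_of_eq ?_
        have heq : ∀ j : ℕ, (if K' < j + (K' + 1) then q ^ (j + (K' + 1)) else 0)
            = q ^ (K' + 1) * q ^ j := by
          intro j
          rw [if_pos (by omega), pow_add, mul_comm]
        calc ∑' j : ℕ, (if K' < j + (K' + 1) then q ^ (j + (K' + 1)) else 0)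
            = ∑' j : ℕ, q ^ (K' + 1) * q ^ j := by exact tsum_congr heq
          _ = q ^ (K' + 1) * ∑' j : ℕ, q ^ j := ENNReal.tsum_mul_left
          _ = q ^ (K' + 1) * C := by rw [hCdef, ENNReal.tsum_geometric]
      exact absurd (lt_of_le_of_lt (hchain.trans htail) hK'lt) (lt_irrefl 1)
    · -- counting contradiction
      push_neg at hgood
      obtain ⟨k, hk⟩ := hgood
      obtain ⟨F, hFsub, hFcard⟩ : ∃ F : Finset ℕ, ↑F ⊆ S k ∧ (2:ℝ) ^ ((k:ℝ)*τ) < F.card := by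
        by_cases hfin : (S k).Finite
        · refine ⟨hfin.toFinset, by simp, ?_⟩
          have := hk hfin
          exact this
        · obtain ⟨T, hT1, hT2, hT3⟩ := (Set.Infinite.exists_subset_ncard_eq hfin)
            (Nat.ceil ((2:ℝ) ^ ((k:ℝ)*τ)) + 1)
          refine ⟨hT2.toFinset, by simpa using hT1, ?_⟩
          rw [Set.ncard_eq_toFinset_card T hT2] at hT3
          rw [hT3]
          push_cast
          have := Nat.le_ceil ((2:ℝ) ^ ((k:ℝ)*τ))
          linarith
      refine absurd hlt (not_lt.2 ?_)
      calc ENNReal.ofReal (2:ℝ)⁻¹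
          ≤ ENNReal.ofReal ((2:ℝ) ^ ((k:ℝ)*τ) * 2 ^ ((-((k:ℝ)+1)) * (s:ℝ))) := by
            refine ENNReal.ofReal_le_ofReal ?_
            rw [← Real.rpow_add (by norm_num : (0:ℝ) < 2)]
            rw [show (2:ℝ)⁻¹ = 2 ^ (-1:ℝ) by rw [Real.rpow_neg_one]]
            refine Real.rpow_le_rpow_of_exponent_le (by norm_num) ?_
            have hs1 : (s:ℝ) ≤ 1 := le_trans hsτ'.le hτ1
            have hsτle : (s:ℝ) ≤ τ := hsτ'.le
            have hk0 : (0:ℝ) ≤ (k:ℝ) := Nat.cast_nonneg k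
            nlinarith
        _ ≤ (F.card : ENNReal) * ENNReal.ofReal ((2:ℝ) ^ ((-((k:ℝ)+1)) * (s:ℝ))) := by
            rw [← ENNReal.ofReal_natCast, ← ENNReal.ofReal_mul (by positivity)]
            exact ENNReal.ofReal_le_ofReal
              (mul_le_mul_of_nonneg_right hFcard.le (by positivity))
        _ = ∑ _n ∈ F, ENNReal.ofReal ((2:ℝ) ^ ((-((k:ℝ)+1)) * (s:ℝ))) := by
            rw [Finset.sum_const, nsmul_eq_mul]
        _ ≤ ∑ n ∈ F, ⨆ _ : (t n).Nonempty, EMetric.diam (t n) ^ (s:ℝ) :=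
            Finset.sum_le_sum fun n hn => hG k n (hFsub hn)
        _ ≤ ∑' n, ⨆ _ : (t n).Nonempty, EMetric.diam (t n) ^ (s:ℝ) := ENNReal.sum_le_tsum F
  have hpos : ENNReal.ofReal (2:ℝ)⁻¹ ≤ μH[(s:ℝ)] Δ := by
    rw [MeasureTheory.Measure.hausdorffMeasure_apply]
    refine le_iSup_of_le (ENNReal.ofReal (2 ^ (-((K':ℝ)+1)))) ?_
    refine le_iSup_of_le (ENNReal.ofReal_pos.2 (by positivity)) ?_
    exact le_iInf fun t => le_iInf fun hc => le_iInf fun hd => hmain t hc hd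
  intro hzero
  rw [hzero] at hpos
  exact absurd hpos (by simp)
end
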